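/- Let X = ∏_{α∈A} X_α be a product of nonempty compact Hausdorff spaces, P ⊆ X a closed subset, and f : P → P a homeomorphism. If {B_i : i ∈ I} is an arbitrary family of f-admissible subsets of A, then B = ⋃_{i∈I} B_i is f-admissible. -/

import Mathlib

/-!
Admissibility of `B` amounts to `f` and `f⁻¹` preserving the fibres of `π_B` on `P`: since `P`
is compact and `P_B` is Hausdorff, `π_B : P → P_B` is a quotient map, and a homeomorphism
preserving its fibres in both directions descends to `P_B`. Two points have the same image under
`π_{⋃ B_j}` iff they have the same image under every `π_{B_j}`, so fibre preservation passes to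
unions.
-/

universe u v

open Set

/-- The projection of the product `∀ i, X i` onto the partial product indexed by `B`. -/
def proj {I : Type u} {X : I → Type u} (B : Set I) (x : ∀ i, X i) : ∀ b : B, X b :=
  fun b => x b

/-- A set `B ⊆ I` is `f`-admissible for a homeomorphism `f : P ≃ₜ P` of a closed subset `P`
of the product `∀ i, X i` if there is a homeomorphism `f_B` of `P_B = π_B(P)` with
`π_B ∘ f = f_B ∘ π_B` on `P`. -/
def IsAdmissible {I : Type u} {X : I → Type u} [∀ i, TopologicalSpace (X i)]
    (P : Set (∀ i, X i)) (f : P ≃ₜ P) (B : Set I) : Prop :=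
  ∃ fB : (proj B '' P : Set (∀ b : B, X b)) ≃ₜ (proj B '' P : Set (∀ b : B, X b)),
    ∀ p : P, (fB ⟨proj B p.1, ⟨p.1, p.2, rfl⟩⟩).1 = proj B (f p).1

open Topology Function

theorem Topology.IsQuotientMap.exists_homeomorph_apply_eq {Y Z : Type*} [TopologicalSpace Y]
    [TopologicalSpace Z] {g : Y → Z} (hg : IsQuotientMap g) (f : Y ≃ₜ Y)
    (hf : FactorsThrough (g ∘ f) g) (hf_symm : FactorsThrough (g ∘ f.symm) g) :
    ∃ h : Z ≃ₜ Z, ∀ y, h (g y) = g (f y) := by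
  let G : C(Y, Z) := ⟨g, hg.continuous⟩
  have hG : IsQuotientMap G := hg
  let F : C(Y, Z) := ⟨g ∘ f, hg.continuous.comp f.continuous⟩
  let F' : C(Y, Z) := ⟨g ∘ f.symm, hg.continuous.comp f.symm.continuous⟩
  let φ := hG.lift F hf
  let ψ := hG.lift F' hf_symm
  have hφ : ∀ y, φ (g y) = g (f y) := DFunLike.congr_fun (hG.lift_comp F hf)
  have hψ : ∀ y, ψ (g y) = g (f.symm y) := DFunLike.congr_fun (hG.lift_comp F' hf_symm)
  refine ⟨{ toFun := φ, invFun := ψ, left_inv := ?_, right_inv := ?_ }, hφ⟩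
  · intro z
    obtain ⟨y, rfl⟩ := hg.surjective z
    rw [hφ, hψ, f.symm_apply_apply]
  · intro z
    obtain ⟨y, rfl⟩ := hg.surjective z
    rw [hψ, hφ, f.apply_symm_apply]

section Admissible

variable {I : Type u} {X : I → Type u}

theorem proj_iUnion_eq_proj_iUnion_iff {ι : Type v} (B : ι → Set I) (x y : ∀ i, X i) :
    proj (⋃ j, B j) x = proj (⋃ j, B j) y ↔ ∀ j, proj (B j) x = proj (B j) y := by
  simp only [funext_iff, proj, Subtype.forall, mem_iUnion]
  exact ⟨fun h j i hi => h i ⟨j, hi⟩, fun h i ⟨j, hi⟩ => h j i hi⟩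

def projOn (P : Set (∀ i, X i)) (B : Set I) (p : P) : proj B '' P :=
  ⟨proj B p, mem_image_of_mem _ p.2⟩

theorem projOn_eq_projOn_iff {P : Set (∀ i, X i)} {B : Set I} {p q : P} :
    projOn P B p = projOn P B q ↔ proj B p.1 = proj B q.1 :=
  Subtype.ext_iff

theorem factorsThrough_projOn_iUnion {P : Set (∀ i, X i)} {ι : Type v} {B : ι → Set I}
    {F : P → P}
    (h : ∀ j, FactorsThrough (projOn P (B j) ∘ F) (projOn P (B j))) :
    FactorsThrough (projOn P (⋃ j, B j) ∘ F) (projOn P (⋃ j, B j)) := by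
  intro p q hpq
  simp only [comp_apply, projOn_eq_projOn_iff, proj_iUnion_eq_proj_iUnion_iff] at hpq ⊢
  exact fun j => projOn_eq_projOn_iff.mp (h j (projOn_eq_projOn_iff.mpr (hpq j)))

variable [∀ i, TopologicalSpace (X i)] {P : Set (∀ i, X i)} {f : P ≃ₜ P}

theorem continuous_proj (B : Set I) : Continuous (proj (X := X) B) :=
  continuous_pi fun b => continuous_apply b.1

theorem isAdmissible_iff {B : Set I} :
    IsAdmissible P f B ↔ ∃ fB : proj B '' P ≃ₜ proj B '' P,
      ∀ p, fB (projOn P B p) = projOn P B (f p) := by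
  simp only [IsAdmissible, Subtype.ext_iff]
  rfl

theorem IsAdmissible.symm {B : Set I} (h : IsAdmissible P f B) : IsAdmissible P f.symm B := by
  obtain ⟨fB, hfB⟩ := isAdmissible_iff.mp h
  refine isAdmissible_iff.mpr ⟨fB.symm, fun p => ?_⟩
  rw [fB.symm_apply_eq, hfB, f.apply_symm_apply]

theorem IsAdmissible.factorsThrough {B : Set I} (h : IsAdmissible P f B) :
    FactorsThrough (projOn P B ∘ f) (projOn P B) := by
  obtain ⟨fB, hfB⟩ := isAdmissible_iff.mp h
  intro p q hpq
  simp only [comp_apply, ← hfB, hpq]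

theorem isQuotientMap_projOn [∀ i, CompactSpace (X i)] [∀ i, T2Space (X i)] (hP : IsClosed P)
    (B : Set I) : IsQuotientMap (projOn P B) := by
  have : CompactSpace P := isCompact_iff_compactSpace.mp hP.isCompact
  have hcont : Continuous (projOn P B) :=
    ((continuous_proj B).comp continuous_subtype_val).subtype_mk _
  refine hcont.isClosedMap.isQuotientMap hcont ?_
  rintro ⟨_, p, hp, rfl⟩
  exact ⟨⟨p, hp⟩, rfl⟩

end Admissible

theorem stmt19_general {I : Type u} {X : I → Type u} [∀ i, TopologicalSpace (X i)]
    [∀ i, CompactSpace (X i)] [∀ i, T2Space (X i)]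
    (P : Set (∀ i, X i)) (hP : IsClosed P) (f : P ≃ₜ P)
    {ι : Type v} (B : ι → Set I) (hB : ∀ j, IsAdmissible P f (B j)) :
    IsAdmissible P f (⋃ j, B j) :=
  isAdmissible_iff.mpr <| (isQuotientMap_projOn hP _).exists_homeomorph_apply_eq f
    (factorsThrough_projOn_iUnion fun j => (hB j).factorsThrough)
    (factorsThrough_projOn_iUnion fun j => (hB j).symm.factorsThrough)

/-- An arbitrary union of `f`-admissible sets is `f`-admissible. -/
theorem stmt19 {I : Type u} {X : I → Type u} [∀ i, TopologicalSpace (X i)]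
    [∀ i, CompactSpace (X i)] [∀ i, T2Space (X i)] [∀ i, Nonempty (X i)]
    (P : Set (∀ i, X i)) (hP : IsClosed P) (f : P ≃ₜ P)
    {ι : Type v} (B : ι → Set I) (hB : ∀ j, IsAdmissible P f (B j)) :
    IsAdmissible P f (⋃ j, B j) :=
  stmt19_general P hP f B hB
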